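/- arXiv:1311.0078 — 2 statements merged into one kernel-verified Lean document; each statement's English description precedes it below -/
import Mathlib

section
/- If δ : ℝ≥0 → ℝ>0 is a nondecreasing function, then there exists a class K function ζ with ζ(r) ≤ δ(r) for all r ≥ 0 and such that ζ is bounded (so that ζ⁻¹ is a class K function defined on [0, sup ζ)). -/
/-- A nondecreasing positive function `δ : ℝ≥0 → ℝ>0` can be minorized by a
bounded class K function `ζ`. -/
theorem stmt_1 (δ : ℝ → ℝ)
    (hpos : ∀ r : ℝ, 0 ≤ r → 0 < δ r)
    (hmono : MonotoneOn δ (Set.Ici 0)) :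
    ∃ ζ : ℝ → ℝ,
      ContinuousOn ζ (Set.Ici 0) ∧
      StrictMonoOn ζ (Set.Ici 0) ∧
      ζ 0 = 0 ∧
      (∀ r : ℝ, 0 ≤ r → ζ r ≤ δ r) ∧
      BddAbove (ζ '' Set.Ici 0) := by
  have hc : 0 < δ 0 := hpos 0 le_rfl
  refine ⟨fun r => δ 0 * (r / (1 + r)), ?_, ?_, by simp, ?_, ?_⟩
  · apply ContinuousOn.mul continuousOn_const
    apply ContinuousOn.div continuousOn_id (by fun_prop)
    intro x hx
    simp only [Set.mem_Ici] at hx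
    linarith
  · intro a ha b hb hab
    simp only [Set.mem_Ici] at ha hb
    apply mul_lt_mul_of_pos_left _ hc
    rw [div_lt_div_iff₀ (by linarith) (by linarith)]
    nlinarith
  · intro r hr
    have h1 : r / (1 + r) ≤ 1 := by
      rw [div_le_one (by linarith)]; linarith
    calc δ 0 * (r / (1 + r)) ≤ δ 0 * 1 := by
          apply mul_le_mul_of_nonneg_left h1 hc.le
      _ ≤ δ r := by rw [mul_one]; exact hmono (Set.mem_Ici.2 le_rfl) hr hr
  · refine ⟨δ 0, ?_⟩
    rintro x ⟨r, hr, rfl⟩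
    simp only [Set.mem_Ici] at hr
    have h1 : r / (1 + r) ≤ 1 := by
      rw [div_le_one (by linarith)]; linarith
    nlinarith
end

section
/- Let (M,d) be a metric space, x̄ ∈ M, and Φ : [t₀,∞) × M → M a flow with Φ(t₀,x)=x. Suppose x̄ is uniformly Lyapunov stable in the sense that for every ε > 0 there exists δ > 0 such that d(x₀,x̄) < δ implies d(Φ(t,x₀),x̄) < ε for all t ≥ t₀. Then there exist r > 0 and a class K function α : [0,r) → ℝ≥0 such that d(Φ(t,x₀),x̄) ≤ α(d(x₀,x̄)) for all x₀ with d(x₀,x̄) < r and all t ≥ t₀. -/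
/-! Choose `δₙ > 0` so that starting within `δₙ` of `x̄` keeps the trajectory within `2⁻ⁿ`.
The series `β s = ∑ₙ 2⁻ⁿ · min 1 (max 0 (s / δₙ₊₁))` is continuous, monotone and vanishes at `0`,
and `β s ≥ 2⁻ⁿ` once `s ≥ δₙ₊₁`. If `δₙ₊₁ ≤ d(x₀, x̄) < δₙ`, the trajectory stays within
`2⁻ⁿ ≤ β (d(x₀, x̄))`, and if `d(x₀, x̄) < δₙ` for every `n` it never leaves `x̄`. Adding `s` makes `α s = s + β s` strictly increasing. -/

namespace ClassK

noncomputable def ramp (c s : ℝ) : ℝ := min 1 (max 0 (s / c))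

lemma ramp_nonneg (c s : ℝ) : 0 ≤ ramp c s :=
  le_min zero_le_one (le_max_left _ _)

lemma ramp_le_one (c s : ℝ) : ramp c s ≤ 1 :=
  min_le_left _ _

@[simp]
lemma ramp_zero_right (c : ℝ) : ramp c 0 = 0 := by
  simp [ramp]

lemma ramp_eq_one {c s : ℝ} (hc : 0 < c) (hcs : c ≤ s) : ramp c s = 1 := by
  have h : 1 ≤ s / c := (one_le_div₀ hc).2 hcs
  rw [ramp, max_eq_right (zero_le_one.trans h), min_eq_left h]

lemma monotone_ramp {c : ℝ} (hc : 0 ≤ c) : Monotone (ramp c) := fun _ _ h =>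
  min_le_min le_rfl (max_le_max le_rfl (div_le_div_of_nonneg_right h hc))

@[fun_prop]
lemma continuous_ramp (c : ℝ) : Continuous (ramp c) := by
  unfold ramp
  fun_prop

noncomputable def rampSeries (δ : ℕ → ℝ) (s : ℝ) : ℝ := ∑' n, (1 / 2 : ℝ) ^ n * ramp (δ n) s

variable (δ : ℕ → ℝ)

lemma rampTerm_nonneg (n : ℕ) (s : ℝ) : 0 ≤ (1 / 2 : ℝ) ^ n * ramp (δ n) s :=
  mul_nonneg (by positivity) (ramp_nonneg _ _)

lemma rampTerm_le (n : ℕ) (s : ℝ) : (1 / 2 : ℝ) ^ n * ramp (δ n) s ≤ (1 / 2 : ℝ) ^ n :=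
  mul_le_of_le_one_right (by positivity) (ramp_le_one _ _)

lemma summable_rampTerm (s : ℝ) : Summable fun n => (1 / 2 : ℝ) ^ n * ramp (δ n) s :=
  (summable_geometric_two).of_nonneg_of_le (rampTerm_nonneg δ · s) (rampTerm_le δ · s)

lemma continuous_rampSeries : Continuous (rampSeries δ) :=
  continuous_tsum (fun n => continuous_const.mul (continuous_ramp (δ n))) summable_geometric_two
    fun n s => by
      rw [Real.norm_of_nonneg (rampTerm_nonneg δ n s)]
      exact rampTerm_le δ n s

lemma rampSeries_nonneg (s : ℝ) : 0 ≤ rampSeries δ s :=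
  tsum_nonneg (rampTerm_nonneg δ · s)

@[simp]
lemma rampSeries_zero : rampSeries δ 0 = 0 := by
  simp [rampSeries]

lemma monotone_rampSeries (hδ : ∀ n, 0 ≤ δ n) : Monotone (rampSeries δ) := fun _ _ h =>
  (summable_rampTerm δ _).tsum_le_tsum
    (fun n => mul_le_mul_of_nonneg_left (monotone_ramp (hδ n) h) (by positivity))
    (summable_rampTerm δ _)

lemma pow_le_rampSeries {n : ℕ} {s : ℝ} (hδn : 0 < δ n) (hs : δ n ≤ s) :
    (1 / 2 : ℝ) ^ n ≤ rampSeries δ s :=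
  calc (1 / 2 : ℝ) ^ n = (1 / 2 : ℝ) ^ n * ramp (δ n) s := by rw [ramp_eq_one hδn hs, mul_one]
    _ ≤ rampSeries δ s := (summable_rampTerm δ s).le_tsum n fun k _ => rampTerm_nonneg δ k s

end ClassK

lemma Nat.forall_or_exists_and_not_succ {P : ℕ → Prop} (h0 : P 0) :
    (∀ n, P n) ∨ ∃ n, P n ∧ ¬P (n + 1) := by
  refine or_iff_not_imp_right.2 fun h n => ?_
  push Not at h
  exact Nat.rec h0 h n

open ClassK in
theorem exists_classK_bound {ι : Type*} (s y : ι → ℝ) (hs : ∀ i, 0 ≤ s i)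
    (hy : ∀ ε > 0, ∃ δ > 0, ∀ i, s i < δ → y i < ε) :
    ∃ r > 0, ∃ α : ℝ → ℝ,
      ContinuousOn α (Set.Ico 0 r) ∧
      StrictMonoOn α (Set.Ico 0 r) ∧
      α 0 = 0 ∧
      (∀ s ∈ Set.Ico 0 r, 0 ≤ α s) ∧
      (∀ i, s i < r → y i ≤ α (s i)) := by
  choose δ hδpos hδ using fun n : ℕ => hy ((1 / 2 : ℝ) ^ n) (by positivity)
  have hβmono := monotone_rampSeries (δ ∘ Nat.succ) fun n => (hδpos _).le
  refine ⟨δ 0, hδpos 0, fun s => s + rampSeries (δ ∘ Nat.succ) s,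
    (continuous_id.add (continuous_rampSeries _)).continuousOn,
    fun a _ b _ hab => add_lt_add_of_lt_of_le hab (hβmono hab.le), by simp,
    fun a ha => add_nonneg ha.1 (rampSeries_nonneg _ a), fun i hi => ?_⟩
  rcases Nat.forall_or_exists_and_not_succ (P := fun n => s i < δ n) hi with hall | ⟨n, hn, hn1⟩
  · have hy0 : y i ≤ 0 := le_of_forall_pos_lt_add fun ε hε => by
      obtain ⟨m, hm⟩ := exists_pow_lt_of_lt_one hε (by norm_num : (1 / 2 : ℝ) < 1)
      linarith [hδ m i (hall m)]
    linarith [hs i, rampSeries_nonneg (δ ∘ Nat.succ) (s i)]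
  · have hβ : (1 / 2 : ℝ) ^ n ≤ rampSeries (δ ∘ Nat.succ) (s i) :=
      pow_le_rampSeries (δ ∘ Nat.succ) (hδpos _) (not_lt.1 hn1)
    linarith [hδ n i hn, hs i]

theorem stmt_2_general {M : Type*} [MetricSpace M]
    (xbar : M) (t₀ : ℝ) (Φ : ℝ → M → M)
    (hstab : ∀ ε > 0, ∃ δ > 0, ∀ x₀ : M, dist x₀ xbar < δ →
      ∀ t ≥ t₀, dist (Φ t x₀) xbar < ε) :
    ∃ r > 0, ∃ α : ℝ → ℝ,
      ContinuousOn α (Set.Ico 0 r) ∧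
      StrictMonoOn α (Set.Ico 0 r) ∧
      α 0 = 0 ∧
      (∀ s ∈ Set.Ico 0 r, 0 ≤ α s) ∧
      (∀ x₀ : M, dist x₀ xbar < r → ∀ t ≥ t₀, dist (Φ t x₀) xbar ≤ α (dist x₀ xbar)) := by
  obtain ⟨r, hr, α, hcont, hmono, hα0, hnonneg, hbound⟩ :=
    exists_classK_bound (ι := M × Set.Ici t₀) (fun p => dist p.1 xbar)
      (fun p => dist (Φ p.2 p.1) xbar) (fun _ => dist_nonneg) fun ε hε => by
        obtain ⟨δ, hδ, h⟩ := hstab ε hε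
        exact ⟨δ, hδ, fun p hp => h p.1 hp p.2 p.2.2⟩
  exact ⟨r, hr, α, hcont, hmono, hα0, hnonneg, fun x₀ hx₀ t ht => hbound (x₀, ⟨t, ht⟩) hx₀⟩

/-- Uniform Lyapunov stability yields a class K bound on trajectories:
there exist `r > 0` and a class K function `α : [0,r) → ℝ≥0` with
`d(Φ(t,x₀),xbar) ≤ α(d(x₀,xbar))` for `d(x₀,xbar) < r`, `t ≥ t₀`. -/
theorem stmt_2 {M : Type*} [MetricSpace M]
    (xbar : M) (t₀ : ℝ) (Φ : ℝ → M → M)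
    (hinit : ∀ x : M, Φ t₀ x = x)
    (hstab : ∀ ε > 0, ∃ δ > 0, ∀ x₀ : M, dist x₀ xbar < δ →
      ∀ t ≥ t₀, dist (Φ t x₀) xbar < ε) :
    ∃ r > 0, ∃ α : ℝ → ℝ,
      ContinuousOn α (Set.Ico 0 r) ∧
      StrictMonoOn α (Set.Ico 0 r) ∧
      α 0 = 0 ∧
      (∀ s ∈ Set.Ico 0 r, 0 ≤ α s) ∧
      (∀ x₀ : M, dist x₀ xbar < r → ∀ t ≥ t₀, dist (Φ t x₀) xbar ≤ α (dist x₀ xbar)) :=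
  stmt_2_general xbar t₀ Φ hstab
end
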